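/- Let k ≥ 3, n = 2^(2k−1), α = 2^k − 1, d₁ = 2^k + 3, d₂ = 2^(k+1) − 3, a₀ = 2^(k−1) − 1, b₀ = 2^(k−1), and s = 2^(k−1) − 3. Let A = {b, …, b^{a₀}} ∪ {ab, …, ab^{a₀}} ∪ {a} and B = {b^α, …, b^{b₀α}} ∪ {ab^α, …, ab^{b₀α}} ∪ {e}, and let A' = {b^{−s+t·d₁} : 0 ≤ t ≤ a₀−1} ∪ {ab^{−s+t·d₁} : 0 ≤ t ≤ a₀−1} ∪ {a} and B' = {b^{−s+t·d₂} : 1 ≤ t ≤ b₀} ∪ {ab^{−s+t·d₂} : 1 ≤ t ≤ b₀} ∪ {e}. Then the automorphism f = f_{−d₁,0} of D_n satisfies f(A) = A' and f(B) = B'; in particular the near-factorizations (A,B) and (A',B') of D_n are equivalent. -/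

import Mathlib

open Pointwise

/-- The automorphism `f_{i,j}` of the dihedral group `D_n`, acting by
`b^h ↦ b^{i·h}` and `a·b^h ↦ a·b^{j + i·h}`. -/
def fij (n : ℕ) (i j : ZMod n) : DihedralGroup n → DihedralGroup n
  | DihedralGroup.r h => DihedralGroup.r (i * h)
  | DihedralGroup.sr h => DihedralGroup.sr (j + i * h)

lemma reindex1 (m : ℕ) : Finset.Icc 1 m = (Finset.range m).image (fun t => m - t) := by
  ext x
  simp only [Finset.mem_Icc, Finset.mem_image, Finset.mem_range]
  constructor
  · rintro ⟨h1, h2⟩; exact ⟨m - x, by omega, by omega⟩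
  · rintro ⟨t, ht, rfl⟩; omega

lemma reindex2 (m : ℕ) : Finset.Icc 1 m = (Finset.Icc 1 m).image (fun t => m + 1 - t) := by
  ext x
  simp only [Finset.mem_Icc, Finset.mem_image]
  constructor
  · rintro ⟨h1, h2⟩; exact ⟨m + 1 - x, by omega, by omega⟩
  · rintro ⟨t, ht, rfl⟩; omega

lemma ptA (m n t : ℕ) (hn : n = 2 ^ (2 * m + 1)) (ht : t < 2 ^ m - 1) :
    (-((2 ^ (m + 1) + 3 : ℕ) : ZMod n)) * ((2 ^ m - 1 - t : ℕ) : ZMod n)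
      = ((-((2 : ℤ) ^ m - 3) + (t : ℤ) * ((2 : ℤ) ^ (m + 1) + 3) : ℤ) : ZMod n) := by
  have h2m : 1 ≤ 2 ^ m := Nat.one_le_two_pow
  have h0 : (2 : ZMod n) ^ (2 * m + 1) = 0 := by
    have := ZMod.natCast_self n
    rw [hn] at this ⊢
    push_cast at this
    exact this
  rw [Nat.cast_sub (by omega : t ≤ 2 ^ m - 1), Nat.cast_sub h2m]
  push_cast
  linear_combination (-1 : ZMod n) * h0

lemma ptB (m n t : ℕ) (hn : n = 2 ^ (2 * m + 1)) (ht : t ≤ 2 ^ m) :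
    (-((2 ^ (m + 1) + 3 : ℕ) : ZMod n)) * (((2 ^ m + 1 - t) * (2 ^ (m + 1) - 1) : ℕ) : ZMod n)
      = ((-((2 : ℤ) ^ m - 3) + (t : ℤ) * ((2 : ℤ) ^ (m + 1 + 1) - 3) : ℤ) : ZMod n) := by
  have h0 : (2 : ZMod n) ^ (2 * m + 1) = 0 := by
    have := ZMod.natCast_self n
    rw [hn] at this ⊢
    push_cast at this
    exact this
  push_cast [Nat.cast_sub (by omega : t ≤ 2 ^ m + 1),
    Nat.cast_sub (Nat.one_le_two_pow : 1 ≤ 2 ^ (m + 1))]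
  linear_combination (-2 * ((2 : ZMod n) ^ m + 2 - (t : ZMod n))) * h0

def autOf (n : ℕ) (u : (ZMod n)ˣ) : DihedralGroup n ≃* DihedralGroup n where
  toFun := fij n u 0
  invFun := fij n ((u⁻¹ : (ZMod n)ˣ) : ZMod n) 0
  left_inv := by
    rintro (h | h) <;> simp [fij, ← mul_assoc, ← Units.val_mul]
  right_inv := by
    rintro (h | h) <;> simp [fij, ← mul_assoc, ← Units.val_mul]
  map_mul' := by
    rintro (h | h) (h' | h') <;> simp [fij] <;> ring

/-- The de Caen et al. near-factorization `(A,B)` and the Bacsó et al.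
near-factorization `(A',B')` of `D_n`, `n = 2^(2k-1)`, `k ≥ 3`, satisfy
`f_{-d₁,0}(A) = A'` and `f_{-d₁,0}(B) = B'`; in particular they are
equivalent near-factorizations. -/
theorem stmt7 (k n : ℕ) (hk : 3 ≤ k) (hn : n = 2 ^ (2 * k - 1)) [NeZero n]
    (A B A' B' : Finset (DihedralGroup n))
    (hA : A = ((Finset.Icc 1 (2 ^ (k - 1) - 1)).image
                  fun t : ℕ => DihedralGroup.r (t : ZMod n)) ∪
              ((Finset.Icc 1 (2 ^ (k - 1) - 1)).image
                  fun t : ℕ => DihedralGroup.sr (t : ZMod n)) ∪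
              {DihedralGroup.sr 0})
    (hB : B = ((Finset.Icc 1 (2 ^ (k - 1))).image
                  fun t : ℕ => DihedralGroup.r ((t * (2 ^ k - 1) : ℕ) : ZMod n)) ∪
              ((Finset.Icc 1 (2 ^ (k - 1))).image
                  fun t : ℕ => DihedralGroup.sr ((t * (2 ^ k - 1) : ℕ) : ZMod n)) ∪
              {1})
    (hA' : A' = ((Finset.range (2 ^ (k - 1) - 1)).image
                  fun t : ℕ => DihedralGroup.r
                    ((-((2 : ℤ) ^ (k - 1) - 3) + (t : ℤ) * ((2 : ℤ) ^ k + 3) : ℤ) : ZMod n)) ∪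
              ((Finset.range (2 ^ (k - 1) - 1)).image
                  fun t : ℕ => DihedralGroup.sr
                    ((-((2 : ℤ) ^ (k - 1) - 3) + (t : ℤ) * ((2 : ℤ) ^ k + 3) : ℤ) : ZMod n)) ∪
              {DihedralGroup.sr 0})
    (hB' : B' = ((Finset.Icc 1 (2 ^ (k - 1))).image
                  fun t : ℕ => DihedralGroup.r
                    ((-((2 : ℤ) ^ (k - 1) - 3) + (t : ℤ) * ((2 : ℤ) ^ (k + 1) - 3) : ℤ) : ZMod n)) ∪
              ((Finset.Icc 1 (2 ^ (k - 1))).image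
                  fun t : ℕ => DihedralGroup.sr
                    ((-((2 : ℤ) ^ (k - 1) - 3) + (t : ℤ) * ((2 : ℤ) ^ (k + 1) - 3) : ℤ) : ZMod n)) ∪
              {1}) :
    A.image (fij n (-((2 ^ k + 3 : ℕ) : ZMod n)) 0) = A' ∧
    B.image (fij n (-((2 ^ k + 3 : ℕ) : ZMod n)) 0) = B' ∧
    ∃ (f : DihedralGroup n ≃* DihedralGroup n) (h : DihedralGroup n),
      A' = (A.image f).image (· * h) ∧ B' = (B.image f).image (h⁻¹ * ·) := by

  obtain ⟨m, rfl⟩ : ∃ m, k = m + 1 := ⟨k - 1, by omega⟩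
  have hm : 2 ≤ m := by omega
  have hn2 : n = 2 ^ (2 * m + 1) := by rw [hn, show 2 * (m + 1) - 1 = 2 * m + 1 from by omega]
  subst hA hB hA' hB'
  simp only [Nat.add_sub_cancel]
  set i : ZMod n := -((2 ^ (m + 1) + 3 : ℕ) : ZMod n) with hi
  have part1 : (((Finset.Icc 1 (2 ^ m - 1)).image
                  fun t : ℕ => DihedralGroup.r (t : ZMod n)) ∪
              ((Finset.Icc 1 (2 ^ m - 1)).image
                  fun t : ℕ => DihedralGroup.sr (t : ZMod n)) ∪
              {DihedralGroup.sr 0}).image (fij n i 0)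
      = ((Finset.range (2 ^ m - 1)).image
                  fun t : ℕ => DihedralGroup.r
                    ((-((2 : ℤ) ^ m - 3) + (t : ℤ) * ((2 : ℤ) ^ (m + 1) + 3) : ℤ) : ZMod n)) ∪
              ((Finset.range (2 ^ m - 1)).image
                  fun t : ℕ => DihedralGroup.sr
                    ((-((2 : ℤ) ^ m - 3) + (t : ℤ) * ((2 : ℤ) ^ (m + 1) + 3) : ℤ) : ZMod n)) ∪
              {DihedralGroup.sr 0} := by
    rw [Finset.image_union, Finset.image_union, Finset.image_singleton]
    congr 1
    · congr 1
      · conv_lhs => rw [Finset.image_image, reindex1 (2 ^ m - 1), Finset.image_image]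
        apply Finset.image_congr
        intro t ht
        simp only [Finset.coe_range, Set.mem_Iio] at ht
        simp only [Function.comp_apply, fij, DihedralGroup.r.injEq]
        exact ptA m n t hn2 ht
      · conv_lhs => rw [Finset.image_image, reindex1 (2 ^ m - 1), Finset.image_image]
        apply Finset.image_congr
        intro t ht
        simp only [Finset.coe_range, Set.mem_Iio] at ht
        simp only [Function.comp_apply, fij, DihedralGroup.sr.injEq, zero_add]
        exact ptA m n t hn2 ht
    · simp [fij]
  have part2 : (((Finset.Icc 1 (2 ^ m)).image
                  fun t : ℕ => DihedralGroup.r ((t * (2 ^ (m + 1) - 1) : ℕ) : ZMod n)) ∪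
              ((Finset.Icc 1 (2 ^ m)).image
                  fun t : ℕ => DihedralGroup.sr ((t * (2 ^ (m + 1) - 1) : ℕ) : ZMod n)) ∪
              {1}).image (fij n i 0)
      = ((Finset.Icc 1 (2 ^ m)).image
                  fun t : ℕ => DihedralGroup.r
                    ((-((2 : ℤ) ^ m - 3) + (t : ℤ) * ((2 : ℤ) ^ (m + 1 + 1) - 3) : ℤ) : ZMod n)) ∪
              ((Finset.Icc 1 (2 ^ m)).image
                  fun t : ℕ => DihedralGroup.sr
                    ((-((2 : ℤ) ^ m - 3) + (t : ℤ) * ((2 : ℤ) ^ (m + 1 + 1) - 3) : ℤ) : ZMod n)) ∪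
              {1} := by
    rw [Finset.image_union, Finset.image_union, Finset.image_singleton]
    congr 1
    · congr 1
      · conv_lhs => rw [Finset.image_image, reindex2 (2 ^ m), Finset.image_image]
        apply Finset.image_congr
        intro t ht
        simp only [Finset.coe_Icc, Set.mem_Icc] at ht
        simp only [Function.comp_apply, fij, DihedralGroup.r.injEq]
        exact ptB m n t hn2 ht.2
      · conv_lhs => rw [Finset.image_image, reindex2 (2 ^ m), Finset.image_image]
        apply Finset.image_congr
        intro t ht
        simp only [Finset.coe_Icc, Set.mem_Icc] at ht
        simp only [Function.comp_apply, fij, DihedralGroup.sr.injEq, zero_add]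
        exact ptB m n t hn2 ht.2
    · simp [fij, DihedralGroup.one_def, -DihedralGroup.r_zero]
  refine ⟨part1, part2, ?_⟩
  have hodd : Nat.Coprime (2 ^ (m + 1) + 3) n := by
    rw [hn2]
    refine Nat.Coprime.pow_right _ ?_
    refine Nat.coprime_comm.mp ((Nat.prime_two.coprime_iff_not_dvd).mpr ?_)
    intro h
    have h2 : 2 ∣ 2 ^ (m + 1) := dvd_pow_self 2 (by omega)
    omega
  have hu : IsUnit i := by
    rw [hi]
    exact (ZMod.isUnit_iff_coprime _ n |>.mpr hodd).neg
  refine ⟨autOf n hu.unit, 1, ?_, ?_⟩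
  · have hfun : ⇑(autOf n hu.unit) = fij n i 0 := by
      have h1 : ⇑(autOf n hu.unit) = fij n (↑hu.unit) 0 := rfl
      rw [h1, hu.unit_spec]
    simp only [hfun, mul_one, Finset.image_id']
    exact part1.symm
  · have hfun : ⇑(autOf n hu.unit) = fij n i 0 := by
      have h1 : ⇑(autOf n hu.unit) = fij n (↑hu.unit) 0 := rfl
      rw [h1, hu.unit_spec]
    simp only [hfun, inv_one, one_mul, Finset.image_id']
    exact part2.symm
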